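/- arXiv:2509.03815 — 2 statements merged into one kernel-verified Lean document; each statement's English description precedes it below -/
import Mathlib

section
/- Let G be a simple graph on a vertex set V and let C₁, C₂ be finite sets of edges of G satisfying the consistency assumption: for all C₁' ⊆ C₁ and C₂' ⊆ C₂, if ∂C₁' = ∂C₂' then C₁' = C₂'. Then for every nonempty subset D' ⊆ C₁ Δ C₂ one has ∂D' ≠ ∅; that is, every nonempty set of edges contained in the symmetric difference of C₁ and C₂ has at least one vertex incident to an odd number of its edges. -/
/-!
The boundary map is additive over `𝔽₂`: for disjoint edge sets, `∂(A ∪ B) = ∂A Δ ∂B`.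
A subset `D'` of `C₁ Δ C₂` is the disjoint union of `D' ∩ C₁` and `D' ∩ C₂`, so `∂D' = ∅` forces
these two parts to have the same boundary. Consistency then makes them equal, and being disjoint
they are both empty, hence so is `D'`.
-/

/-- The boundary of a finite set of edges `C`: the set of vertices incident to an
odd number of edges of `C`. -/
def boundary {V : Type*} [DecidableEq V] (C : Finset (Sym2 V)) : Set V :=
  {v : V | Odd (C.filter (fun e => v ∈ e)).card}

theorem boundary_union_of_disjoint {V : Type*} [DecidableEq V] {A B : Finset (Sym2 V)}
    (h : Disjoint A B) : boundary (A ∪ B) = symmDiff (boundary A) (boundary B) := by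
  ext v
  simp only [boundary, Set.mem_symmDiff, Set.mem_ofPred_eq, Finset.filter_union,
    Finset.card_union_of_disjoint (Finset.disjoint_filter_filter h), Nat.odd_add,
    ← Nat.not_odd_iff_even]
  tauto

theorem boundary_eq_of_boundary_union_eq_empty {V : Type*} [DecidableEq V]
    {A B : Finset (Sym2 V)} (h : Disjoint A B) (hAB : boundary (A ∪ B) = ∅) :
    boundary A = boundary B := by
  rwa [boundary_union_of_disjoint h, ← Set.bot_eq_empty, symmDiff_eq_bot] at hAB

theorem Finset.inter_union_inter_eq_of_subset_symmDiff {α : Type*} [DecidableEq α]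
    {D s t : Finset α} (hD : D ⊆ symmDiff s t) : D ∩ s ∪ D ∩ t = D := by
  rw [← Finset.inter_union_distrib_left, Finset.inter_eq_left]
  exact hD.trans symmDiff_le_sup

theorem Finset.disjoint_inter_inter_of_subset_symmDiff {α : Type*} [DecidableEq α]
    {D s t : Finset α} (hD : D ⊆ symmDiff s t) : Disjoint (D ∩ s) (D ∩ t) := by
  rw [Finset.disjoint_iff_inter_eq_empty, Finset.inter_inter_inter_comm, Finset.inter_self]
  exact Finset.disjoint_iff_inter_eq_empty.mp ((disjoint_symmDiff_inf s t).mono_left hD)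

theorem boundary_ne_empty_of_consistent_general {V : Type*} [DecidableEq V]
    (C₁ C₂ : Finset (Sym2 V))
    (hconsistent : ∀ C₁' ⊆ C₁, ∀ C₂' ⊆ C₂, boundary C₁' = boundary C₂' → C₁' = C₂') :
    ∀ D' ⊆ symmDiff C₁ C₂, D'.Nonempty → boundary D' ≠ ∅ := by
  intro D' hD hne hbd
  have hdisj := Finset.disjoint_inter_inter_of_subset_symmDiff hD
  have hunion := Finset.inter_union_inter_eq_of_subset_symmDiff hD
  have heq : D' ∩ C₁ = D' ∩ C₂ :=
    hconsistent _ Finset.inter_subset_right _ Finset.inter_subset_right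
      (boundary_eq_of_boundary_union_eq_empty hdisj (by rwa [hunion]))
  rw [← heq, disjoint_self, Finset.bot_eq_empty] at hdisj
  rw [← heq, hdisj, Finset.empty_union] at hunion
  exact hne.ne_empty hunion.symm

/-- Under the consistency assumption on the pair `(C₁, C₂)`, every nonempty subset of the
symmetric difference `C₁ Δ C₂` has a nonempty boundary. -/
theorem boundary_ne_empty_of_consistent {V : Type*} [DecidableEq V] (G : SimpleGraph V)
    (C₁ C₂ : Finset (Sym2 V)) (h₁ : ↑C₁ ⊆ G.edgeSet) (h₂ : ↑C₂ ⊆ G.edgeSet)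
    (hconsistent : ∀ C₁' ⊆ C₁, ∀ C₂' ⊆ C₂, boundary C₁' = boundary C₂' → C₁' = C₂') :
    ∀ D' ⊆ symmDiff C₁ C₂, D'.Nonempty → boundary D' ≠ ∅ :=
  boundary_ne_empty_of_consistent_general C₁ C₂ hconsistent
end

section
/- (Theorem A.1: minimum weight to produce a non-trivial seam syndrome.) Let G be a simple graph on a vertex set V with an edge weight function w assigning a nonnegative real number to each edge. Let O ⊆ V (the overlap region of two adjacent decoding windows), let v ∈ O (a seam detection event), and let w_b ≥ 0 (the weighted buffer size) be such that every walk in G from v to any vertex u ∉ O has total edge weight at least w_b. Let C₁, C₂ be finite edge sets (the corrections output in the two windows) satisfying: (i) the consistency assumption: for all C₁' ⊆ C₁ and C₂' ⊆ C₂, if ∂C₁' = ∂C₂' then C₁' = C₂'; (ii) ∂C₁ ∩ O = ∂C₂ ∩ O; and (iii) some edge of C₁ Δ C₂ is incident to v. Then w(C₁) ≥ w_b/2 or w(C₂) ≥ w_b/2. Moreover, if 𝓔₁ and 𝓔₂ are finite edge sets (physical error configurations) with w(C₁) ≤ w(𝓔₁) and w(C₂) ≤ w(𝓔₂) (as holds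 when each Cᵢ is a minimum-weight correction for the syndrome of 𝓔ᵢ), then w(𝓔₁) ≥ w_b/2 or w(𝓔₂) ≥ w_b/2. -/
open Finset

lemma Finset.odd_card_symmDiff_iff {α : Type*} [DecidableEq α] (s t : Finset α) :
    Odd #(symmDiff s t) ↔ ¬(Odd #s ↔ Odd #t) := by
  have hcard : #(symmDiff s t) + 2 * #(s ∩ t) = #s + #t := by
    rw [symmDiff_def, sup_eq_union, card_union_of_disjoint disjoint_sdiff_sdiff]
    have := card_sdiff_add_card_inter s t
    have := card_sdiff_add_card_inter t s
    rw [inter_comm t s] at this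
    omega
  simp only [Nat.odd_iff]
  omega

lemma Finset.sum_symmDiff_le_sum_add_sum {α M : Type*} [DecidableEq α] [AddCommMonoid M]
    [PartialOrder M] [IsOrderedAddMonoid M] {s t : Finset α} {f : α → M}
    (hf : ∀ a ∈ s ∪ t, 0 ≤ f a) :
    ∑ a ∈ symmDiff s t, f a ≤ ∑ a ∈ s, f a + ∑ a ∈ t, f a := by
  calc ∑ a ∈ symmDiff s t, f a
      ≤ ∑ a ∈ s ∪ t, f a :=
        sum_le_sum_of_subset_of_nonneg symmDiff_subset_union fun a ha _ => hf a ha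
    _ ≤ ∑ a ∈ s ∪ t, f a + ∑ a ∈ s ∩ t, f a :=
        le_add_of_nonneg_right (sum_nonneg fun a ha => hf a (inter_subset_union ha))
    _ = ∑ a ∈ s, f a + ∑ a ∈ t, f a := sum_union_inter

section

variable {V : Type*} [DecidableEq V]

lemma boundary_symmDiff (A B : Finset (Sym2 V)) :
    boundary (symmDiff A B) = symmDiff (boundary A) (boundary B) := by
  ext x
  have hfilter : (symmDiff A B).filter (fun e => x ∈ e)
      = symmDiff (A.filter (fun e => x ∈ e)) (B.filter (fun e => x ∈ e)) := by
    ext e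
    simp only [mem_filter, mem_symmDiff]
    tauto
  simp only [boundary, Set.mem_ofPred_eq, Set.mem_symmDiff, hfilter, odd_card_symmDiff_iff]
  tauto

def CycleFree (D : Finset (Sym2 V)) : Prop :=
  ∀ Z ⊆ D, boundary Z = ∅ → Z = ∅

lemma cycleFree_symmDiff {C₁ C₂ : Finset (Sym2 V)}
    (hconsistent : ∀ C₁' ⊆ C₁, ∀ C₂' ⊆ C₂, boundary C₁' = boundary C₂' → C₁' = C₂') :
    CycleFree (symmDiff C₁ C₂) := by
  intro Z hZ hZbd
  have hsplit : Z = symmDiff (Z ∩ C₁) (Z ∩ C₂) := by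
    rw [← inf_eq_inter, ← inf_eq_inter, ← inf_symmDiff_distrib_left, inf_eq_inter,
      inter_eq_left.mpr hZ]
  have hbd : boundary (Z ∩ C₁) = boundary (Z ∩ C₂) := by
    rwa [hsplit, boundary_symmDiff, Set.symmDiff_eq_empty] at hZbd
  rw [hsplit, hconsistent _ inter_subset_right _ inter_subset_right hbd, symmDiff_self,
    bot_eq_empty]

namespace SimpleGraph

variable {G : SimpleGraph V}

namespace Walk

lemma IsTrail.mem_boundary_edges_toFinset_iff {u v : V} {p : G.Walk u v} (hp : p.IsTrail)
    (x : V) : x ∈ boundary p.edges.toFinset ↔ u ≠ v ∧ (x = u ∨ x = v) := by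
  have hcount :
      #(p.edges.toFinset.filter (fun e => x ∈ e)) = p.edges.countP (fun e => x ∈ e) := by
    rw [List.countP_eq_length_filter, ← List.toFinset_card_of_nodup (hp.edges_nodup.filter _),
      List.toFinset_filter]
    simp only [decide_eq_true_eq]
  simp only [boundary, Set.mem_ofPred_eq, hcount, ← Nat.not_even_iff_odd,
    hp.even_countP_edges_iff]
  tauto

end Walk

open Walk

variable {D : Finset (Sym2 V)}

lemma exists_edge_extending_trail (hD : CycleFree D) {u v : V} (hv : ∃ e ∈ D, v ∈ e)
    {p : G.Walk u v} (hp : p.IsTrail) (hpD : p.edges.toFinset ⊆ D) (hu : u ∉ boundary D) :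
    ∃ e ∈ D, u ∈ e ∧ e ∉ p.edges := by
  by_contra! hall
  have hfilter : D.filter (fun e => u ∈ e) = p.edges.toFinset.filter (fun e => u ∈ e) := by
    ext e
    simp only [mem_filter, List.mem_toFinset]
    exact ⟨fun ⟨he, hue⟩ => ⟨hall e he hue, hue⟩,
      fun ⟨he, hue⟩ => ⟨hpD (List.mem_toFinset.mpr he), hue⟩⟩
  have hup : u ∉ boundary p.edges.toFinset := by
    simpa only [boundary, Set.mem_ofPred_eq, hfilter] using hu
  obtain rfl : u = v := by
    by_contra huv
    exact hup ((hp.mem_boundary_edges_toFinset_iff u).mpr ⟨huv, Or.inl rfl⟩)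
  have hempty : p.edges.toFinset = ∅ :=
    hD _ hpD (Set.eq_empty_of_forall_notMem fun x hx =>
      ((hp.mem_boundary_edges_toFinset_iff x).mp hx).1 rfl)
  obtain ⟨e, he, hue⟩ := hv
  exact notMem_empty e (hempty ▸ List.mem_toFinset.mpr (hall e he hue))

lemma exists_trail_from_boundary (hDG : ↑D ⊆ G.edgeSet) (hD : CycleFree D) {v : V}
    (hv : ∃ e ∈ D, v ∈ e) :
    ∃ u ∈ boundary D, ∃ p : G.Walk u v, p.IsTrail ∧ p.edges.toFinset ⊆ D := by
  by_contra! hnone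
  have hlong : ∀ n, ∃ u, ∃ p : G.Walk u v, p.IsTrail ∧ p.edges.toFinset ⊆ D ∧ p.length = n := by
    intro n
    induction n with
    | zero => exact ⟨v, nil, by simp, by simp, rfl⟩
    | succ n ih =>
      obtain ⟨u, p, hp, hpD, rfl⟩ := ih
      obtain ⟨e, heD, hue, hep⟩ :=
        exists_edge_extending_trail hD hv hp hpD fun hu => hnone u hu p hp hpD
      obtain ⟨y, rfl⟩ := Sym2.mem_iff_exists.mp hue
      have hadj : G.Adj y u := (G.mem_edgeSet.mp (hDG heD)).symm
      refine ⟨y, cons hadj p, ?_, ?_, rfl⟩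
      · exact (isTrail_cons hadj p).mpr ⟨hp, Sym2.eq_swap ▸ hep⟩
      · rw [edges_cons, List.toFinset_cons, insert_subset_iff, Sym2.eq_swap]
        exact ⟨heD, hpD⟩
  obtain ⟨u, p, hp, hpD, hlen⟩ := hlong (#D + 1)
  have := card_le_card hpD
  rw [List.toFinset_card_of_nodup hp.edges_nodup, length_edges] at this
  omega

end SimpleGraph

end

theorem seam_syndrome_min_weight_general {V : Type*} [DecidableEq V]
    (G : SimpleGraph V) (w : Sym2 V → ℝ) (hw : ∀ e ∈ G.edgeSet, 0 ≤ w e)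
    (O : Set V) (v : V) (w_b : ℝ)
    (hbuffer : ∀ u : V, u ∉ O → ∀ q : G.Walk v u, w_b ≤ (q.edges.map w).sum)
    (C₁ C₂ : Finset (Sym2 V)) (h₁ : ↑C₁ ⊆ G.edgeSet) (h₂ : ↑C₂ ⊆ G.edgeSet)
    (hconsistent : ∀ C₁' ⊆ C₁, ∀ C₂' ⊆ C₂, boundary C₁' = boundary C₂' → C₁' = C₂')
    (hagree : boundary C₁ ∩ O = boundary C₂ ∩ O)
    (hseam : ∃ e ∈ symmDiff C₁ C₂, v ∈ e) :
    (w_b / 2 ≤ ∑ e ∈ C₁, w e ∨ w_b / 2 ≤ ∑ e ∈ C₂, w e) ∧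
      ∀ 𝓔₁ 𝓔₂ : Finset (Sym2 V),
        (∑ e ∈ C₁, w e) ≤ (∑ e ∈ 𝓔₁, w e) → (∑ e ∈ C₂, w e) ≤ (∑ e ∈ 𝓔₂, w e) →
          (w_b / 2 ≤ ∑ e ∈ 𝓔₁, w e ∨ w_b / 2 ≤ ∑ e ∈ 𝓔₂, w e) := by
  have hCG : ↑(C₁ ∪ C₂) ⊆ G.edgeSet := by
    rw [coe_union]
    exact Set.union_subset h₁ h₂
  have hDG : ↑(symmDiff C₁ C₂) ⊆ G.edgeSet := (coe_subset.mpr symmDiff_subset_union).trans hCG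
  obtain ⟨u, hu, p, hp, hpD⟩ :=
    SimpleGraph.exists_trail_from_boundary hDG (cycleFree_symmDiff hconsistent) hseam
  have huO : u ∉ O := by
    have hdisj : boundary (symmDiff C₁ C₂) ∩ O = ∅ := by
      rw [boundary_symmDiff, Set.inter_symmDiff_distrib_right, hagree, symmDiff_self]
      rfl
    exact fun huO => hdisj.subset ⟨hu, huO⟩
  have hwC : ∀ e ∈ C₁ ∪ C₂, 0 ≤ w e := fun e he => hw e (hCG he)
  have hsum : w_b ≤ ∑ e ∈ C₁, w e + ∑ e ∈ C₂, w e :=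
    calc w_b ≤ (p.reverse.edges.map w).sum := hbuffer u huO p.reverse
      _ = ∑ e ∈ p.edges.toFinset, w e := by
        rw [p.edges_reverse, List.map_reverse, List.sum_reverse,
          List.sum_toFinset _ hp.edges_nodup]
      _ ≤ ∑ e ∈ symmDiff C₁ C₂, w e :=
        sum_le_sum_of_subset_of_nonneg hpD fun e he _ => hwC e (symmDiff_subset_union he)
      _ ≤ ∑ e ∈ C₁, w e + ∑ e ∈ C₂, w e := sum_symmDiff_le_sum_add_sum hwC
  have half : ∀ a b : ℝ, w_b ≤ a + b → w_b / 2 ≤ a ∨ w_b / 2 ≤ b := fun a b hab => by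
    by_contra! h
    linarith [h.1, h.2]
  exact ⟨half _ _ hsum, fun 𝓔₁ 𝓔₂ hE₁ hE₂ => half _ _ (by linarith)⟩

/-- Theorem A.1 (minimum weight to produce a non-trivial seam syndrome).
If every walk from the seam vertex `v ∈ O` to a vertex outside the overlap region `O` has
weight at least `w_b`, the two window corrections `C₁, C₂` satisfy the consistency
assumption and have boundaries agreeing on `O`, and some edge of `C₁ Δ C₂` is incident to
`v`, then `w(C₁) ≥ w_b/2` or `w(C₂) ≥ w_b/2`; moreover any physical error configurations
`𝓔₁, 𝓔₂` with `w(C₁) ≤ w(𝓔₁)` and `w(C₂) ≤ w(𝓔₂)` satisfy `w(𝓔₁) ≥ w_b/2` or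
`w(𝓔₂) ≥ w_b/2`. -/
theorem seam_syndrome_min_weight {V : Type*} [DecidableEq V]
    (G : SimpleGraph V) (w : Sym2 V → ℝ) (hw : ∀ e ∈ G.edgeSet, 0 ≤ w e)
    (O : Set V) (v : V) (hv : v ∈ O) (w_b : ℝ) (hwb : 0 ≤ w_b)
    (hbuffer : ∀ u : V, u ∉ O → ∀ q : G.Walk v u, w_b ≤ (q.edges.map w).sum)
    (C₁ C₂ : Finset (Sym2 V)) (h₁ : ↑C₁ ⊆ G.edgeSet) (h₂ : ↑C₂ ⊆ G.edgeSet)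
    (hconsistent : ∀ C₁' ⊆ C₁, ∀ C₂' ⊆ C₂, boundary C₁' = boundary C₂' → C₁' = C₂')
    (hagree : boundary C₁ ∩ O = boundary C₂ ∩ O)
    (hseam : ∃ e ∈ symmDiff C₁ C₂, v ∈ e) :
    (w_b / 2 ≤ ∑ e ∈ C₁, w e ∨ w_b / 2 ≤ ∑ e ∈ C₂, w e) ∧
      ∀ 𝓔₁ 𝓔₂ : Finset (Sym2 V),
        (∑ e ∈ C₁, w e) ≤ (∑ e ∈ 𝓔₁, w e) → (∑ e ∈ C₂, w e) ≤ (∑ e ∈ 𝓔₂, w e) →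
          (w_b / 2 ≤ ∑ e ∈ 𝓔₁, w e ∨ w_b / 2 ≤ ∑ e ∈ 𝓔₂, w e) :=
  seam_syndrome_min_weight_general G w hw O v w_b hbuffer C₁ C₂ h₁ h₂ hconsistent hagree hseam
end
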